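/- For every odd n ∈ ℕ (n ≥ 1), there exists a Boolean function f : {0,1}^n → {0,1} representable by a decision tree of depth (n+1)/2 with 2n+1 nodes, and an instance x ∈ {0,1}^n, such that the number of minimal sufficient reasons for x given f is 2^((n-1)/2). -/

import Mathlib

/-!
Take `n = 2m + 1` variables: selectors `s₀, …, s_{m-1}`, payloads `p₀, …, p_{m-1}` and a
default `z`, and let `f` be the decision list
`if s₀ then p₀ else if s₁ then p₁ else … else z`, a read-once tree with `m + 1` levels and
`4m + 3 = 2n + 1` nodes. At `x` with all selectors false and all payloads and `z` true, the
variables split into the blocks `{sᵢ, pᵢ}` and `{z}`: `f y` is true as soon as `y` agrees with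
`x` somewhere in every block, and false once `y` flips a whole block. Hence the terms covering
`x` that are implicants are exactly those meeting every block, the minimal sufficient reasons
are the transversals (one literal of `x` per block), and there are `2^m` of them.
-/

/-- A term (or clause) over variables `V`: a finite set of literals,
where a literal is a pair (variable, polarity). -/
abbrev Term (V : Type*) := Finset (V × Bool)

/-- An assignment `y` satisfies a term `t` if all its literals hold. -/
def Term.sat {V : Type*} (t : Term V) (y : V → Bool) : Prop :=
  ∀ p ∈ t, y p.1 = p.2

/-- A term is consistent if no variable occurs with both polarities. -/
def Term.consistent {V : Type*} (t : Term V) : Prop :=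
  ∀ v : V, ¬((v, true) ∈ t ∧ (v, false) ∈ t)

/-- `t` is an implicant of `f`: a consistent term all of whose models are models of `f`. -/
def Implicant {V : Type*} (f : (V → Bool) → Bool) (t : Term V) : Prop :=
  Term.consistent t ∧ ∀ y, Term.sat t y → f y = true

/-- `t` is a prime implicant of `f`: an implicant no proper subterm of which is an implicant. -/
def PrimeImplicant {V : Type*} (f : (V → Bool) → Bool) (t : Term V) : Prop :=
  Implicant f t ∧ ∀ s ⊂ t, ¬ Implicant f s

/-- A sufficient reason for `x` given `f`: a prime implicant of `f` covering `x`. -/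
def SuffReason {V : Type*} (f : (V → Bool) → Bool) (x : V → Bool) (t : Term V) : Prop :=
  PrimeImplicant f t ∧ Term.sat t x

/-- Boolean decision trees over `n` variables. -/
inductive DTree (n : ℕ) where
  | leaf : Bool → DTree n
  | node : Fin n → DTree n → DTree n → DTree n

/-- Evaluation of a decision tree: go left on 0, right on 1. -/
def DTree.eval {n : ℕ} : DTree n → (Fin n → Bool) → Bool
  | .leaf b, _ => b
  | .node i l r, x => if x i then r.eval x else l.eval x

/-- Number of nodes of a decision tree. -/
def DTree.size {n : ℕ} : DTree n → ℕ
  | .leaf _ => 1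
  | .node _ l r => 1 + l.size + r.size

/-- Depth of a decision tree. -/
def DTree.depth {n : ℕ} : DTree n → ℕ
  | .leaf _ => 0
  | .node _ l r => 1 + max l.depth r.depth

/-- Auxiliary: no variable in `s` appears, and recursively on children. -/
def DTree.readOnceAux {n : ℕ} : DTree n → Finset (Fin n) → Prop
  | .leaf _, _ => True
  | .node i l r, s =>
      i ∉ s ∧ l.readOnceAux (insert i s) ∧ r.readOnceAux (insert i s)

/-- Read-once property: every variable appears at most once on any root-to-leaf path. -/
def DTree.readOnce {n : ℕ} (T : DTree n) : Prop := T.readOnceAux ∅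

/-- A minimal sufficient reason: a sufficient reason of minimum cardinality. -/
def MinSuffReason {V : Type*} (f : (V → Bool) → Bool) (x : V → Bool) (t : Term V) : Prop :=
  SuffReason f x t ∧ ∀ s : Term V, SuffReason f x s → t.card ≤ s.card

namespace Term

variable {V : Type*}

theorem sat.mono {s t : Term V} {y : V → Bool} (hst : s ⊆ t) (ht : t.sat y) : s.sat y :=
  fun ℓ hℓ => ht ℓ (hst hℓ)

theorem consistent_of_sat {t : Term V} {y : V → Bool} (ht : t.sat y) : t.consistent := by
  rintro v ⟨htrue, hfalse⟩
  have := ht _ htrue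
  have := ht _ hfalse
  simp_all

end Term

section SufficientReasons

variable {V : Type*} {f : (V → Bool) → Bool}

theorem Implicant.exists_primeImplicant_subset {t : Term V} (ht : Implicant f t) :
    ∃ u ⊆ t, PrimeImplicant f u := by
  obtain ⟨u, ⟨hut, hu⟩, hmin⟩ :=
    WellFounded.has_min wellFounded_lt {u : Term V | u ⊆ t ∧ Implicant f u} ⟨t, subset_rfl, ht⟩
  exact ⟨u, hut, hu, fun s hsu hs => hmin s ⟨hsu.subset.trans hut, hs⟩ hsu⟩

-- Minimum size forces primality, and every implicant contains a prime one.
theorem minSuffReason_iff {x : V → Bool} {t : Term V} :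
    MinSuffReason f x t ↔
      Implicant f t ∧ t.sat x ∧ ∀ s : Term V, Implicant f s → s.sat x → t.card ≤ s.card := by
  constructor
  · rintro ⟨⟨⟨ht, -⟩, htx⟩, hmin⟩
    refine ⟨ht, htx, fun s hs hsx => ?_⟩
    obtain ⟨u, hus, hu⟩ := hs.exists_primeImplicant_subset
    exact (hmin u ⟨hu, hsx.mono hus⟩).trans (Finset.card_le_card hus)
  · rintro ⟨ht, htx, hmin⟩
    refine ⟨⟨⟨ht, fun s hst hs => ?_⟩, htx⟩, fun s hs => hmin s hs.1.1 hs.2⟩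
    exact (hmin s hs (htx.mono hst.subset)).not_gt (Finset.card_lt_card hst)

end SufficientReasons

namespace Term

variable {V ι : Type*}

def MeetsFibers (blk : V → ι) (t : Term V) : Prop :=
  ∀ b, ∃ ℓ ∈ t, blk ℓ.1 = b

theorem MeetsFibers.card_le [Fintype ι] {blk : V → ι} {t : Term V} (ht : t.MeetsFibers blk) :
    Fintype.card ι ≤ t.card := by
  rw [← Finset.card_univ]
  exact Finset.card_le_card_of_surjOn (fun ℓ => blk ℓ.1) fun b _ => ht b

def transversal [Fintype ι] [DecidableEq V] (blk : V → ι) (x : V → Bool)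
    (σ : (b : ι) → {v // blk v = b}) : Term V :=
  Finset.univ.image fun b => ((σ b).1, x (σ b).1)

variable [Fintype ι] [DecidableEq V] {blk : V → ι} {x : V → Bool}

theorem mem_transversal {σ : (b : ι) → {v // blk v = b}} {ℓ : V × Bool} :
    ℓ ∈ transversal blk x σ ↔ ∃ b, ((σ b).1, x (σ b).1) = ℓ := by
  simp [transversal]

theorem sat_transversal (σ : (b : ι) → {v // blk v = b}) : (transversal blk x σ).sat x := by
  intro ℓ hℓ
  obtain ⟨b, rfl⟩ := mem_transversal.1 hℓ
  rfl

theorem meetsFibers_transversal (σ : (b : ι) → {v // blk v = b}) :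
    (transversal blk x σ).MeetsFibers blk :=
  fun b => ⟨_, mem_transversal.2 ⟨b, rfl⟩, (σ b).2⟩

theorem card_transversal (σ : (b : ι) → {v // blk v = b}) :
    (transversal blk x σ).card = Fintype.card ι := by
  refine (Finset.card_image_of_injective _ fun b c hbc => ?_).trans Finset.card_univ
  rw [← (σ b).2, ← (σ c).2]
  exact congrArg (fun ℓ : V × Bool => blk ℓ.1) hbc

theorem transversal_injective : Function.Injective (transversal blk x) := by
  intro σ τ hστ
  funext b
  obtain ⟨c, hc⟩ := mem_transversal.1 (hστ ▸ mem_transversal.2 ⟨b, rfl⟩ :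
    ((σ b).1, x (σ b).1) ∈ transversal blk x τ)
  have hv : (τ c).1 = (σ b).1 := congrArg Prod.fst hc
  obtain rfl : c = b := by rw [← (τ c).2, ← (σ b).2, hv]
  exact Subtype.ext hv.symm

end Term

section Fibers

variable {V ι : Type*} [DecidableEq ι] {blk : V → ι} {f : (V → Bool) → Bool} {x : V → Bool}

structure HasFiberwiseReasons (blk : V → ι) (f : (V → Bool) → Bool) (x : V → Bool) : Prop where
  eq_true : ∀ y : V → Bool, (∀ b, ∃ v, blk v = b ∧ y v = x v) → f y = true
  flip_eq_false : ∀ b, f (fun v => if blk v = b then !x v else x v) = false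

theorem HasFiberwiseReasons.implicant_iff (hf : HasFiberwiseReasons blk f x) {t : Term V}
    (htx : t.sat x) : Implicant f t ↔ t.MeetsFibers blk := by
  constructor
  · rintro ⟨-, ht⟩ b
    by_contra! hb
    have hflip : t.sat fun v => if blk v = b then !x v else x v := fun ℓ hℓ => by
      simp [hb ℓ hℓ, htx ℓ hℓ]
    simpa [hf.flip_eq_false b] using ht _ hflip
  · refine fun ht => ⟨Term.consistent_of_sat htx, fun y hy => hf.eq_true y fun b => ?_⟩
    obtain ⟨ℓ, hℓ, rfl⟩ := ht b
    exact ⟨ℓ.1, rfl, (hy ℓ hℓ).trans (htx ℓ hℓ).symm⟩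

variable [Fintype ι] [DecidableEq V]

theorem HasFiberwiseReasons.minSuffReason_iff (hf : HasFiberwiseReasons blk f x) {t : Term V} :
    MinSuffReason f x t ↔ t ∈ Set.range (Term.transversal blk x) := by
  rw [_root_.minSuffReason_iff]
  constructor
  · rintro ⟨ht, htx, hmin⟩
    choose ℓ hℓt hℓb using (hf.implicant_iff htx).1 ht
    let σ : (b : ι) → {v // blk v = b} := fun b => ⟨(ℓ b).1, hℓb b⟩
    have hσt : Term.transversal blk x σ ⊆ t := fun l hl => by
      obtain ⟨b, rfl⟩ := Term.mem_transversal.1 hl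
      show ((ℓ b).1, x (ℓ b).1) ∈ t
      rw [htx _ (hℓt b)]
      exact hℓt b
    refine ⟨σ, Finset.eq_of_subset_of_card_le hσt (hmin _ ?_ (Term.sat_transversal σ))⟩
    exact (hf.implicant_iff (Term.sat_transversal σ)).2 (Term.meetsFibers_transversal σ)
  · rintro ⟨σ, rfl⟩
    refine ⟨(hf.implicant_iff (Term.sat_transversal σ)).2 (Term.meetsFibers_transversal σ),
      Term.sat_transversal σ, fun s hs hsx => ?_⟩
    rw [Term.card_transversal]
    exact ((hf.implicant_iff hsx).1 hs).card_le

theorem HasFiberwiseReasons.ncard_minSuffReason [Fintype V] (hf : HasFiberwiseReasons blk f x) :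
    {t : Term V | MinSuffReason f x t}.ncard = ∏ b, Fintype.card {v // blk v = b} := by
  have hset : {t : Term V | MinSuffReason f x t} = Set.range (Term.transversal blk x) :=
    Set.ext fun t => hf.minSuffReason_iff
  rw [hset, Set.ncard_range_of_injective Term.transversal_injective, Nat.card_eq_fintype_card,
    Fintype.card_pi]

end Fibers

namespace DTree

variable {n : ℕ}

/-- `if s₁ then p₁ else if s₂ then p₂ else … else z` for `L = [(s₁, p₁), (s₂, p₂), …]`. -/
def decisionList : List (Fin n × Fin n) → Fin n → DTree n
  | [], z => node z (leaf false) (leaf true)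
  | (s, p) :: L, z => node s (decisionList L z) (node p (leaf false) (leaf true))

def decisionListVars (L : List (Fin n × Fin n)) (z : Fin n) : List (Fin n) :=
  L.flatMap (fun q => [q.1, q.2]) ++ [z]

theorem depth_decisionList (L : List (Fin n × Fin n)) (z : Fin n) :
    (decisionList L z).depth = L.length + 1 := by
  induction L with
  | nil => rfl
  | cons q L ih => simp only [decisionList, depth, ih, List.length_cons]; omega

theorem size_decisionList (L : List (Fin n × Fin n)) (z : Fin n) :
    (decisionList L z).size = 4 * L.length + 3 := by
  induction L with
  | nil => rfl
  | cons q L ih => simp only [decisionList, size, ih, List.length_cons]; omega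

theorem decisionListVars_cons (s p : Fin n) (L : List (Fin n × Fin n)) (z : Fin n) :
    decisionListVars ((s, p) :: L) z = s :: p :: decisionListVars L z := by
  simp [decisionListVars]

theorem readOnceAux_decisionList (L : List (Fin n × Fin n)) (z : Fin n) (S : Finset (Fin n))
    (hnodup : (decisionListVars L z).Nodup) (hS : ∀ v ∈ decisionListVars L z, v ∉ S) :
    (decisionList L z).readOnceAux S := by
  induction L generalizing S with
  | nil => simpa [decisionList, readOnceAux, decisionListVars] using hS
  | cons q L ih =>
    obtain ⟨s, p⟩ := q
    simp only [decisionListVars_cons, List.nodup_cons, List.mem_cons, not_or,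
      forall_eq_or_imp] at hnodup hS
    refine ⟨hS.1, ih _ hnodup.2.2 fun v hv hvS => ?_, ?_, trivial, trivial⟩
    · rcases Finset.mem_insert.1 hvS with rfl | hvS
      · exact hnodup.1.2 hv
      · exact hS.2.2 v hv hvS
    · rw [Finset.mem_insert, not_or]
      exact ⟨Ne.symm hnodup.1.1, hS.2.1⟩

theorem eval_decisionList_eq {L : List (Fin n × Fin n)} {z : Fin n} {y : Fin n → Bool} {c : Bool}
    (hfired : ∀ q ∈ L, y q.1 = true → y q.2 = c) (hfires : y z = c ∨ ∃ q ∈ L, y q.1 = true) :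
    (decisionList L z).eval y = c := by
  induction L with
  | nil => simpa [decisionList, eval] using hfires
  | cons q L ih =>
    obtain ⟨s, p⟩ := q
    simp only [List.mem_cons, forall_eq_or_imp, exists_eq_or_imp] at hfired hfires
    by_cases hs : y s = true
    · simp [decisionList, eval, hs, ← hfired.1 hs]
    · simp only [decisionList, eval, hs, Bool.false_eq_true, if_false]
      exact ih hfired.2 (by simpa [hs] using hfires)

end DTree

namespace SelectorChain

variable (m : ℕ)

def selector (i : Fin m) : Fin (2 * m + 1) := ⟨2 * i, by omega⟩

def payload (i : Fin m) : Fin (2 * m + 1) := ⟨2 * i + 1, by omega⟩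

def tree : DTree (2 * m + 1) :=
  DTree.decisionList (List.ofFn fun i => (selector m i, payload m i)) (Fin.last (2 * m))

def input (v : Fin (2 * m + 1)) : Bool := decide (v.val % 2 = 1 ∨ v = Fin.last (2 * m))

def block (v : Fin (2 * m + 1)) : Fin (m + 1) := ⟨v / 2, by omega⟩

variable {m}

@[simp] theorem val_selector (i : Fin m) : (selector m i).val = 2 * i := rfl

@[simp] theorem val_payload (i : Fin m) : (payload m i).val = 2 * i + 1 := rfl

@[simp] theorem block_selector (i : Fin m) : block m (selector m i) = i.castSucc := by
  ext; simp [block]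

@[simp] theorem block_payload (i : Fin m) : block m (payload m i) = i.castSucc := by
  ext; simp only [block, payload, Fin.val_castSucc]; omega

@[simp] theorem block_last : block m (Fin.last (2 * m)) = Fin.last m := by
  ext; simp [block]

@[simp] theorem input_selector (i : Fin m) : input m (selector m i) = false := by
  simp [input, selector, Fin.ext_iff, i.isLt.ne]

@[simp] theorem input_payload (i : Fin m) : input m (payload m i) = true := by
  simp [input, payload]

@[simp] theorem input_last : input m (Fin.last (2 * m)) = true := by
  simp [input]

theorem eq_last_of_block_eq_last {v : Fin (2 * m + 1)} (hv : block m v = Fin.last m) :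
    v = Fin.last (2 * m) := by
  simp only [block, Fin.ext_iff, Fin.val_last] at hv ⊢; omega

theorem block_eq_castSucc_iff {v : Fin (2 * m + 1)} {i : Fin m} :
    block m v = i.castSucc ↔ v = selector m i ∨ v = payload m i := by
  simp only [block, selector, payload, Fin.ext_iff, Fin.val_castSucc]; omega

theorem hasFiberwiseReasons : HasFiberwiseReasons (block m) (tree m).eval (input m) where
  eq_true y hy := by
    refine DTree.eval_decisionList_eq (fun q hq hsel => ?_) (Or.inl ?_)
    · obtain ⟨i, rfl⟩ := List.mem_ofFn.1 hq
      obtain ⟨v, hv, hyv⟩ := hy i.castSucc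
      rcases block_eq_castSucc_iff.1 hv with rfl | rfl
      · simp [hsel] at hyv
      · simpa using hyv
    · obtain ⟨v, hv, hyv⟩ := hy (Fin.last m)
      simpa [eq_last_of_block_eq_last hv] using hyv
  flip_eq_false b := by
    refine DTree.eval_decisionList_eq (fun q hq hsel => ?_) ?_
    · obtain ⟨i, rfl⟩ := List.mem_ofFn.1 hq
      by_cases hb : i.castSucc = b <;> simp_all
    · induction b using Fin.lastCases with
      | last => simp
      | cast i => exact Or.inr ⟨_, List.mem_ofFn.2 ⟨i, rfl⟩, by simp⟩

theorem card_block_eq_castSucc (i : Fin m) :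
    Fintype.card {v // block m v = i.castSucc} = 2 := by
  have hfiber : Finset.univ.filter (fun v => block m v = i.castSucc) =
      {selector m i, payload m i} := by
    ext v; simp [block_eq_castSucc_iff]
  rw [Fintype.card_subtype, hfiber, Finset.card_pair]
  simp [Fin.ext_iff]

theorem card_block_eq_last : Fintype.card {v // block m v = Fin.last m} = 1 := by
  rw [Fintype.card_eq_one_iff]
  exact ⟨⟨_, block_last⟩, fun v => Subtype.ext (eq_last_of_block_eq_last v.2)⟩

theorem ncard_minSuffReason :
    {t : Term (Fin (2 * m + 1)) | MinSuffReason (tree m).eval (input m) t}.ncard = 2 ^ m := by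
  rw [hasFiberwiseReasons.ncard_minSuffReason, Fin.prod_univ_castSucc]
  simp [card_block_eq_castSucc, card_block_eq_last]

theorem depth_tree : (tree m).depth = m + 1 := by
  simp [tree, DTree.depth_decisionList]

theorem size_tree : (tree m).size = 4 * m + 3 := by
  simp [tree, DTree.size_decisionList]

theorem readOnce_tree : (tree m).readOnce := by
  refine DTree.readOnceAux_decisionList _ _ _ (List.Pairwise.nodup (r := (· < ·)) ?_) (by simp)
  simp only [Fin.lt_def, DTree.decisionListVars, List.pairwise_append, List.pairwise_flatMap,
    List.mem_ofFn, List.pairwise_cons, List.mem_cons, List.not_mem_nil, or_false, forall_eq,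
    IsEmpty.forall_iff, implies_true, List.Pairwise.nil, and_self, and_true, forall_exists_index,
    forall_apply_eq_imp_iff, forall_eq_or_imp, List.pairwise_ofFn, Fin.val_last, List.mem_flatMap,
    exists_exists_eq_and, true_and]
  refine ⟨⟨fun i => ?_, fun i j hij => ?_⟩, ?_⟩
  · simp only [val_selector, val_payload]; omega
  · simp only [val_selector, val_payload]; omega
  · rintro v i (rfl | rfl) <;> simp only [val_selector, val_payload] <;> omega

end SelectorChain

theorem stmt_8_general (n : ℕ) (hodd : Odd n) :
    ∃ (T : DTree n) (x : Fin n → Bool),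
      T.readOnce ∧ T.depth = (n + 1) / 2 ∧ T.size = 2 * n + 1 ∧
      {t : Term (Fin n) | MinSuffReason T.eval x t}.ncard = 2 ^ ((n - 1) / 2) := by
  obtain ⟨m, rfl⟩ := hodd
  refine ⟨SelectorChain.tree m, SelectorChain.input m, SelectorChain.readOnce_tree, ?_, ?_, ?_⟩
  · rw [SelectorChain.depth_tree]; omega
  · rw [SelectorChain.size_tree]; omega
  · rw [SelectorChain.ncard_minSuffReason, show (2 * m + 1 - 1) / 2 = m by omega]

/-- For every odd `n ≥ 1` there is a (read-once) decision tree on `n` variables of depth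
`(n+1)/2` with `2n+1` nodes and an instance `x` such that the number of minimal
sufficient reasons for `x` given the tree is `2^((n-1)/2)`. -/
theorem stmt_8 (n : ℕ) (hodd : Odd n) (hn : 1 ≤ n) :
    ∃ (T : DTree n) (x : Fin n → Bool),
      T.readOnce ∧ T.depth = (n + 1) / 2 ∧ T.size = 2 * n + 1 ∧
      {t : Term (Fin n) | MinSuffReason T.eval x t}.ncard = 2 ^ ((n - 1) / 2) :=
  stmt_8_general n hodd
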